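/- arXiv:0801.3835 — 3 statements merged into one kernel-verified Lean document; each statement's English description precedes it below -/
import Mathlib

section
/- Let F be a number field of degree n and D = (I,u) an Arakelov divisor with Hermite constant γ(D) defined as the squared length of the shortest nonzero vector of the lattice uI divided by covol(D)^{2/n}. Then n/|Δ_F|^{1/n} ≤ γ(D) ≤ n·(2/π)^{2r₂/n}. -/
/-!
Write `m_w` for the local degrees and `N(u) = ∏_w u_w^{m_w}`. For `0 ≠ f ∈ I` the vector `u f`
has `∏_w (u_w |f|_w)^{m_w} = N(u) |N(f)| ≥ N(u) N(I)`, so the weighted AM-GM inequality gives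
`‖u f‖² ≥ n (N(u) N(I))^{2/n}`, which is the lower bound once `covol(D) = √|Δ_F| N(I) N(u)` is
substituted. For the upper bound, Minkowski's theorem applied to the box `{x : |x_w| < c / u_w}`
in the mixed space yields a nonzero `f ∈ I` with `u_w |f|_w < c` at every place as soon as the
volume `2^{r₁} π^{r₂} c^n / N(u)` of the box beats `2^n` times the covolume `2^{-r₂} √|Δ_F| N(I)`
of `I`, i.e. as soon as `c^n > (2/π)^{r₂} covol(D)`; then `‖u f‖² ≤ n c²`, and letting `c^n`
decrease to `(2/π)^{r₂} covol(D)` gives the bound.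
-/

open NumberField Module FractionalIdeal
open scoped nonZeroDivisors

theorem Real.prod_pow_rpow_two_div_le_sum_mul_sq_div {ι : Type*} (s : Finset ι) (m : ι → ℕ)
    (a : ι → ℝ) (ha : ∀ i ∈ s, 0 ≤ a i) (hm : 0 < ∑ i ∈ s, m i) :
    (∏ i ∈ s, a i ^ m i) ^ (2 / ∑ i ∈ s, (m i : ℝ)) ≤
      (∑ i ∈ s, m i * a i ^ 2) / ∑ i ∈ s, (m i : ℝ) := by
  have amgm := Real.geom_mean_le_arith_mean s (fun i ↦ (m i : ℝ)) (fun i ↦ a i ^ 2)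
    (fun _ _ ↦ by positivity) (by exact_mod_cast hm) (fun _ _ ↦ by positivity)
  convert amgm using 1
  rw [div_eq_mul_inv, Real.rpow_mul (Finset.prod_nonneg fun i hi ↦ pow_nonneg (ha i hi) _),
    Real.rpow_two, ← Finset.prod_pow]
  congr 1
  refine Finset.prod_congr rfl fun i _ ↦ ?_
  rw [Real.rpow_natCast, ← pow_mul, ← pow_mul, mul_comm]

theorem FractionalIdeal.absNorm_le_abs_norm_of_mem {F : Type*} [Field F] [NumberField F]
    {I : FractionalIdeal (𝓞 F)⁰ F} {f : F} (hf : f ∈ I) (hf0 : f ≠ 0) :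
    absNorm I ≤ |Algebra.norm ℚ f| := by
  have hI : I ≠ 0 := fun h ↦ hf0 (by simpa [h] using hf)
  obtain ⟨J, hJ⟩ : ∃ J : Ideal (𝓞 F), (J : FractionalIdeal (𝓞 F)⁰ F) = I⁻¹ * spanSingleton _ f :=
    le_one_iff_exists_coeIdeal.mp <| calc
      I⁻¹ * spanSingleton _ f ≤ I⁻¹ * I := mul_le_mul_right (spanSingleton_le_iff_mem.mpr hf) _
      _ = 1 := inv_mul_cancel₀ hI
  have hfactor : I * J = spanSingleton (𝓞 F)⁰ f := by
    rw [hJ, ← mul_assoc, mul_inv_cancel₀ hI, one_mul]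
  have hJ0 : J ≠ ⊥ := by
    rintro rfl
    simp [eq_comm, spanSingleton_eq_zero_iff, hf0] at hfactor
  have hJnorm : (1 : ℚ) ≤ absNorm (J : FractionalIdeal (𝓞 F)⁰ F) := by
    rw [coeIdeal_absNorm, Nat.one_le_cast, Nat.one_le_iff_ne_zero, ne_eq, Ideal.absNorm_eq_zero_iff]
    exact hJ0
  calc absNorm I ≤ absNorm I * absNorm (J : FractionalIdeal (𝓞 F)⁰ F) :=
        le_mul_of_one_le_right (absNorm_nonneg I) hJnorm
    _ = |Algebra.norm ℚ f| := by rw [← map_mul, hfactor, absNorm_span_singleton]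

namespace NumberField.mixedEmbedding

open InfinitePlace MeasureTheory
open scoped NNReal Real

variable {F : Type*} [Field F] [NumberField F]

theorem minkowskiBound_toReal (I : (FractionalIdeal (𝓞 F)⁰ F)ˣ) :
    (minkowskiBound F I).toReal = 2 ^ finrank ℚ F * 2⁻¹ ^ nrComplexPlaces F *
      √|(discr F : ℝ)| * absNorm (I : FractionalIdeal (𝓞 F)⁰ F) := by
  rw [minkowskiBound, volume_fundamentalDomain_fractionalIdealLatticeBasis,
    volume_fundamentalDomain_latticeBasis, mixedEmbedding.finrank, ENNReal.toReal_mul,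
    ENNReal.toReal_mul, ENNReal.toReal_mul,
    ENNReal.toReal_ofReal (by exact_mod_cast absNorm_nonneg _), ENNReal.toReal_pow,
    ENNReal.toReal_pow, ENNReal.toReal_inv, ENNReal.toReal_ofNat, ENNReal.coe_toReal,
    Real.coe_sqrt, coe_nnnorm, Int.norm_eq_abs]
  ring

theorem exists_ne_zero_mem_ideal_lt_of_lt_prod (I : (FractionalIdeal (𝓞 F)⁰ F)ˣ)
    {g : InfinitePlace F → ℝ≥0}
    (h : (2 / π) ^ nrComplexPlaces F *
        (√|(discr F : ℝ)| * absNorm (I : FractionalIdeal (𝓞 F)⁰ F)) < ∏ w, (g w : ℝ) ^ w.mult) :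
    ∃ a ∈ (I : FractionalIdeal (𝓞 F)⁰ F), a ≠ 0 ∧ ∀ w, w a < g w := by
  classical
  refine exists_ne_zero_mem_ideal_lt F I ?_
  have hvolume : (volume (convexBodyLT F g)).toReal =
      2 ^ nrRealPlaces F * π ^ nrComplexPlaces F * ∏ w, (g w : ℝ) ^ w.mult := by
    simp [convexBodyLT_volume]
  rw [← ENNReal.toReal_lt_toReal (minkowskiBound_lt_top F I).ne
    (by rw [convexBodyLT_volume]; exact ENNReal.mul_ne_top ENNReal.coe_ne_top ENNReal.coe_ne_top),
    minkowskiBound_toReal, hvolume, ← card_add_two_mul_card_eq_rank]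
  calc _ = 2 ^ nrRealPlaces F * π ^ nrComplexPlaces F * ((2 / π) ^ nrComplexPlaces F *
        (√|(discr F : ℝ)| * absNorm (I : FractionalIdeal (𝓞 F)⁰ F))) := by
        have h2 : (2 : ℝ) ^ (2 * nrComplexPlaces F) * 2⁻¹ ^ nrComplexPlaces F =
            2 ^ nrComplexPlaces F := by
          rw [two_mul, pow_add, mul_assoc, ← mul_pow, mul_inv_cancel₀ two_ne_zero, one_pow, mul_one]
        have hπ : π ^ nrComplexPlaces F * (2 / π) ^ nrComplexPlaces F = 2 ^ nrComplexPlaces F := by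
          rw [← mul_pow, mul_div_cancel₀ _ Real.pi_ne_zero]
        rw [pow_add]
        linear_combination (2 ^ nrRealPlaces F * √|(discr F : ℝ)| *
          absNorm (I : FractionalIdeal (𝓞 F)⁰ F)) * (h2 - hπ)
    _ < _ := by gcongr

end NumberField.mixedEmbedding

namespace NumberField

open InfinitePlace
open scoped NNReal Real

variable {F : Type*} [Field F] [NumberField F] {I : FractionalIdeal (𝓞 F)⁰ F}
  {u : InfinitePlace F → ℝ}

/-- `‖f‖_D²` for the divisor `D = (I, u)`: the squared length of `u f` in `F_ℝ`. -/
noncomputable def arakelovLengthSq (u : InfinitePlace F → ℝ) (f : F) : ℝ :=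
  ∑ w : InfinitePlace F, (w.mult : ℝ) * (u w * w f) ^ 2

noncomputable def arakelovCovol (I : FractionalIdeal (𝓞 F)⁰ F) (u : InfinitePlace F → ℝ) : ℝ :=
  √|(discr F : ℝ)| * (absNorm I : ℝ) * ∏ v : InfinitePlace F, u v ^ v.mult

theorem arakelovCovol_pos (hI : I ≠ 0) (hu : ∀ w, 0 < u w) : 0 < arakelovCovol I u := by
  have hΔ : (0 : ℝ) < |(discr F : ℝ)| := by exact_mod_cast abs_pos.mpr (discr_ne_zero F)
  have hN : (0 : ℝ) < absNorm I := by
    exact_mod_cast (absNorm_nonneg I).lt_of_ne' (absNorm_eq_zero_iff.not.mpr hI)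
  have hP : 0 < ∏ v : InfinitePlace F, u v ^ v.mult := Finset.prod_pos fun v _ ↦ pow_pos (hu v) _
  unfold arakelovCovol
  positivity

theorem finrank_mul_rpow_le_arakelovLengthSq (hu : ∀ w, 0 ≤ u w) {f : F} (hf : f ∈ I)
    (hf0 : f ≠ 0) :
    (finrank ℚ F : ℝ) * ((absNorm I : ℝ) * ∏ w, u w ^ w.mult) ^ (2 / (finrank ℚ F : ℝ)) ≤
      arakelovLengthSq u f := by
  have hn : ∑ w : InfinitePlace F, (w.mult : ℝ) = finrank ℚ F := by
    exact_mod_cast sum_mult_eq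
  have hprod : ∏ w, (u w * w f) ^ w.mult = ((|Algebra.norm ℚ f| : ℚ) : ℝ) * ∏ w, u w ^ w.mult := by
    simp_rw [mul_pow, Finset.prod_mul_distrib, prod_eq_abs_norm]
    exact mul_comm _ _
  have amgm := Real.prod_pow_rpow_two_div_le_sum_mul_sq_div Finset.univ (fun w ↦ w.mult)
    (fun w ↦ u w * w f) (fun w _ ↦ mul_nonneg (hu w) (w.1.nonneg f))
    (by rw [sum_mult_eq]; exact finrank_pos)
  rw [hn, hprod, le_div_iff₀' (by exact_mod_cast finrank_pos)] at amgm
  refine le_trans ?_ amgm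
  have hN : (0 : ℝ) ≤ absNorm I := by exact_mod_cast absNorm_nonneg I
  have hP : 0 ≤ ∏ w, u w ^ w.mult := Finset.prod_nonneg fun w _ ↦ pow_nonneg (hu w) _
  gcongr
  exact_mod_cast absNorm_le_abs_norm_of_mem hf hf0

theorem exists_arakelovLengthSq_le (hI : I ≠ 0) (hu : ∀ w, 0 < u w) {c : ℝ} (hc : 0 < c)
    (h : (2 / π) ^ nrComplexPlaces F * arakelovCovol I u < c ^ finrank ℚ F) :
    ∃ f ∈ I, f ≠ 0 ∧ arakelovLengthSq u f ≤ finrank ℚ F * c ^ 2 := by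
  have hP : 0 < ∏ w, u w ^ w.mult := Finset.prod_pos fun w _ ↦ pow_pos (hu w) _
  let g : InfinitePlace F → ℝ≥0 := fun w ↦ (c / u w).toNNReal
  have hgw : ∀ w, (g w : ℝ) = c / u w := fun w ↦ Real.coe_toNNReal _ (div_pos hc (hu w)).le
  have hg : ∏ w, (g w : ℝ) ^ w.mult = c ^ finrank ℚ F / ∏ w, u w ^ w.mult := by
    simp_rw [hgw, div_pow, Finset.prod_div_distrib,
      Finset.prod_pow_eq_pow_sum, sum_mult_eq]
  obtain ⟨a, haI, ha0, hlt⟩ :=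
    mixedEmbedding.exists_ne_zero_mem_ideal_lt_of_lt_prod (Units.mk0 I hI) (g := g) <| by
      rw [hg, lt_div_iff₀ hP]
      refine lt_of_eq_of_lt ?_ h
      rw [Units.val_mk0, arakelovCovol]
      ring
  refine ⟨a, haI, ha0, ?_⟩
  have hle : ∀ w, u w * w a ≤ c := fun w ↦ ((lt_div_iff₀' (hu w)).mp (hgw w ▸ hlt w)).le
  calc arakelovLengthSq u a ≤ ∑ w : InfinitePlace F, (w.mult : ℝ) * c ^ 2 :=
        Finset.sum_le_sum fun w _ ↦ by
          gcongr
          · exact mul_nonneg (hu w).le (w.1.nonneg a)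
          · exact hle w
    _ = finrank ℚ F * c ^ 2 := by
      rw [← Finset.sum_mul, ← Nat.cast_sum, sum_mult_eq]

theorem le_sInf_arakelovLengthSq (hI : I ≠ 0) (hu : ∀ w, 0 ≤ u w) :
    (finrank ℚ F : ℝ) * ((absNorm I : ℝ) * ∏ w, u w ^ w.mult) ^ (2 / (finrank ℚ F : ℝ)) ≤
      sInf {x : ℝ | ∃ f : F, f ∈ I ∧ f ≠ 0 ∧ x = arakelovLengthSq u f} := by
  obtain ⟨f, hf, hf0⟩ : ∃ f ∈ I, f ≠ 0 := by
    by_contra! h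
    exact hI (eq_zero_iff.mpr h)
  refine le_csInf ⟨_, f, hf, hf0, rfl⟩ ?_
  rintro _ ⟨f, hf, hf0, rfl⟩
  exact finrank_mul_rpow_le_arakelovLengthSq hu hf hf0

theorem sInf_arakelovLengthSq_le (hI : I ≠ 0) (hu : ∀ w, 0 < u w) :
    sInf {x : ℝ | ∃ f : F, f ∈ I ∧ f ≠ 0 ∧ x = arakelovLengthSq u f} ≤
      finrank ℚ F *
        ((2 / π) ^ nrComplexPlaces F * arakelovCovol I u) ^ (2 / (finrank ℚ F : ℝ)) := by
  set S := {x : ℝ | ∃ f : F, f ∈ I ∧ f ≠ 0 ∧ x = arakelovLengthSq u f}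
  set n := finrank ℚ F
  set T := (2 / π) ^ nrComplexPlaces F * arakelovCovol I u
  have hT : 0 < T := mul_pos (pow_pos (by positivity) _) (arakelovCovol_pos hI hu)
  have hbdd : BddBelow S := ⟨0, by rintro _ ⟨f, -, -, rfl⟩; unfold arakelovLengthSq; positivity⟩
  have hn : n ≠ 0 := finrank_pos.ne'
  -- Minkowski needs a box of volume strictly above the bound: let its side `c` decrease to `c₀`.
  set c₀ := T ^ (n⁻¹ : ℝ)
  have hc₀ : 0 < c₀ := Real.rpow_pos_of_pos hT _
  have hbox : ∀ c > c₀, sInf S ≤ n * c ^ 2 := by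
    intro c hc
    obtain ⟨f, hf, hf0, hle⟩ := exists_arakelovLengthSq_le hI hu (hc₀.trans hc) <| calc
      T = c₀ ^ n := (Real.rpow_inv_natCast_pow hT.le hn).symm
      _ < c ^ n := by gcongr
    exact (csInf_le hbdd ⟨f, hf, hf0, rfl⟩).trans hle
  have hlim : sInf S ≤ n * c₀ ^ 2 :=
    ge_of_tendsto ((by fun_prop : Continuous fun c : ℝ ↦ (n : ℝ) * c ^ 2).tendsto c₀
      |>.mono_left nhdsWithin_le_nhds) (eventually_nhdsWithin_of_forall (s := Set.Ioi c₀) hbox)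
  rwa [← Real.rpow_natCast, ← Real.rpow_mul hT.le, Nat.cast_ofNat, inv_mul_eq_div] at hlim

end NumberField

/-- Corollary 4.6. The Hermite constant `γ(D)` of an Arakelov
divisor `D = (I,u)`, namely the squared length of a shortest nonzero vector of
the lattice `uI` divided by `covol(D)^{2/n}`, satisfies
`n/|Δ_F|^{1/n} ≤ γ(D) ≤ n·(2/π)^{2r₂/n}`. -/
theorem hermite_constant_bounds (F : Type*) [Field F] [NumberField F]
    (I : FractionalIdeal (𝓞 F)⁰ F) (hI : I ≠ 0)
    (u : InfinitePlace F → ℝ) (hu : ∀ w, 0 < u w) :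
    (finrank ℚ F : ℝ) / |(discr F : ℝ)| ^ ((1 : ℝ) / (finrank ℚ F)) ≤
        sInf {x : ℝ | ∃ f : F, f ∈ I ∧ f ≠ 0 ∧
            x = ∑ w : InfinitePlace F, (w.mult : ℝ) * (u w * w f) ^ 2} /
          (Real.sqrt |(discr F : ℝ)| * (absNorm I : ℝ) *
            ∏ v : InfinitePlace F, u v ^ v.mult) ^ ((2 : ℝ) / (finrank ℚ F)) ∧
      sInf {x : ℝ | ∃ f : F, f ∈ I ∧ f ≠ 0 ∧
            x = ∑ w : InfinitePlace F, (w.mult : ℝ) * (u w * w f) ^ 2} /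
          (Real.sqrt |(discr F : ℝ)| * (absNorm I : ℝ) *
            ∏ v : InfinitePlace F, u v ^ v.mult) ^ ((2 : ℝ) / (finrank ℚ F)) ≤
        (finrank ℚ F : ℝ) * (2 / Real.pi) ^ ((2 * InfinitePlace.nrComplexPlaces F : ℝ) / (finrank ℚ F)) := by
  set n : ℝ := (finrank ℚ F : ℝ)
  have hΔ : 0 < |(discr F : ℝ)| := by exact_mod_cast abs_pos.mpr (discr_ne_zero F)
  have hcovol : 0 < arakelovCovol I u ^ (2 / n) := Real.rpow_pos_of_pos (arakelovCovol_pos hI hu) _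
  have hcovol_rpow : arakelovCovol I u ^ (2 / n) =
      |(discr F : ℝ)| ^ (1 / n) * ((absNorm I : ℝ) * ∏ w, u w ^ w.mult) ^ (2 / n) := by
    have hN : (0 : ℝ) ≤ absNorm I := by exact_mod_cast absNorm_nonneg I
    have hP : 0 ≤ ∏ w, u w ^ w.mult := Finset.prod_nonneg fun w _ ↦ (pow_pos (hu w) _).le
    rw [arakelovCovol, mul_assoc, Real.mul_rpow (Real.sqrt_nonneg _) (by positivity),
      Real.sqrt_eq_rpow, ← Real.rpow_mul hΔ.le]
    ring_nf
  refine ⟨(le_div_iff₀ hcovol).mpr ?_, (div_le_iff₀ hcovol).mpr ?_⟩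
  · calc n / |(discr F : ℝ)| ^ (1 / n) * arakelovCovol I u ^ (2 / n)
        = n * ((absNorm I : ℝ) * ∏ w, u w ^ w.mult) ^ (2 / n) := by
          rw [hcovol_rpow]
          field_simp
      _ ≤ _ := le_sInf_arakelovLengthSq hI fun w ↦ (hu w).le
  · calc _ ≤ n * ((2 / Real.pi) ^ InfinitePlace.nrComplexPlaces F * arakelovCovol I u) ^ (2 / n) :=
          sInf_arakelovLengthSq_le hI hu
      _ = _ := by
          rw [Real.mul_rpow (by positivity) (arakelovCovol_pos hI hu).le, ← Real.rpow_natCast,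
            ← Real.rpow_mul (by positivity)]
          ring_nf
end

section
/- Let F be a number field. The set Red_F of reduced Arakelov divisors, i.e., divisors of the form d(I) = (I, N(I)^{−1/n}) with 1 a minimal element of the fractional ideal I, is finite. -/
/-!
If `1` is a minimal element of `I`, Minkowski's convex body theorem applied to the box
`{|σ(x)| < 1}` shows that `N(I)` is bounded below by a constant depending only on `F`.
Since `1 ∈ I`, the inverse `I⁻¹` is an integral ideal, whose norm `N(I)⁻¹` is therefore
bounded, and there are only finitely many integral ideals of bounded norm.
-/

open NumberField Module FractionalIdeal
open scoped nonZeroDivisors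

namespace FractionalIdeal

theorem ne_zero_of_one_mem {R P : Type*} [CommRing R] {S : Submonoid R} [CommRing P]
    [Nontrivial P] [Algebra R P] {I : FractionalIdeal S P} (h : (1 : P) ∈ I) : I ≠ 0 := by
  rintro rfl
  exact one_ne_zero ((mem_zero_iff S).mp h)

theorem inv_le_one_of_one_mem {R K : Type*} [CommRing R] [IsDomain R] [Field K] [Algebra R K]
    [IsFractionRing R K] {I : FractionalIdeal R⁰ K} (h : (1 : K) ∈ I) : I⁻¹ ≤ 1 := by
  simpa using inv_anti_mono (ne_zero_of_one_mem (one_mem_one R⁰)) (ne_zero_of_one_mem h)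
    (one_le.mpr h)

end FractionalIdeal

namespace NumberField.mixedEmbedding

variable {K : Type*} [Field K] [NumberField K]

theorem minkowskiBound_eq_absNorm_mul (I : (FractionalIdeal (𝓞 K)⁰ K)ˣ) :
    minkowskiBound K I =
      .ofReal (absNorm (I : FractionalIdeal (𝓞 K)⁰ K)) * minkowskiBound K 1 := by
  classical
  rw [minkowskiBound, minkowskiBound, volume_fundamentalDomain_fractionalIdealLatticeBasis,
    volume_fundamentalDomain_fractionalIdealLatticeBasis, Units.val_one, absNorm_one, Rat.cast_one,
    ENNReal.ofReal_one, one_mul, mul_assoc]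

theorem convexBodyLTFactor_le_minkowskiBound (I : (FractionalIdeal (𝓞 K)⁰ K)ˣ)
    (hI : ∀ g ∈ (I : FractionalIdeal (𝓞 K)⁰ K),
      (∀ w : InfinitePlace K, w g < 1) → g = 0) :
    (convexBodyLTFactor K : ENNReal) ≤ minkowskiBound K I := by
  classical
  by_contra! hlt
  have hvol : MeasureTheory.volume (convexBodyLT K fun _ ↦ 1) = convexBodyLTFactor K := by
    simp [convexBodyLT_volume]
  obtain ⟨a, haI, ha0, haw⟩ :=
    exists_ne_zero_mem_ideal_lt K I (f := fun _ ↦ 1) (hvol ▸ hlt)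
  exact ha0 (hI a haI (by simpa using haw))

theorem absNorm_inv_le_of_forall_infinitePlace_lt_one_imp_eq_zero
    {I : FractionalIdeal (𝓞 K)⁰ K} (hI0 : I ≠ 0)
    (hI : ∀ g ∈ I, (∀ w : InfinitePlace K, w g < 1) → g = 0) :
    (absNorm I⁻¹ : ℝ) ≤ (minkowskiBound K 1).toReal / convexBodyLTFactor K := by
  have hnorm : (0 : ℝ) < absNorm I := by
    exact_mod_cast (absNorm_nonneg I).lt_of_ne' (absNorm_eq_zero_iff.not.mpr hI0)
  have hfactor : (0 : ℝ) < convexBodyLTFactor K :=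
    NNReal.coe_pos.mpr (pos_iff_ne_zero.mpr (convexBodyLTFactor_ne_zero K))
  have hle := convexBodyLTFactor_le_minkowskiBound (Units.mk0 I hI0) hI
  rw [minkowskiBound_eq_absNorm_mul, Units.val_mk0] at hle
  have hle_real : (convexBodyLTFactor K : ℝ) ≤ absNorm I * (minkowskiBound K 1).toReal := by
    simpa [ENNReal.toReal_mul, hnorm.le] using
      ENNReal.toReal_mono (ENNReal.mul_ne_top ENNReal.ofReal_ne_top
        (minkowskiBound_lt_top K 1).ne) hle
  rw [map_inv₀, Rat.cast_inv, le_div_iff₀ hfactor, inv_mul_le_iff₀ hnorm]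
  exact hle_real

end NumberField.mixedEmbedding

/-- Prop. 7.2(ii). The set of reduced Arakelov divisors is
finite: since a reduced divisor `d(I) = (I, N(I)^{-1/n})` is determined by its
fractional ideal `I`, this says that the set of fractional ideals `I`
containing `1` as a minimal element is finite. -/
theorem reduced_arakelov_divisors_finite (F : Type*) [Field F] [NumberField F] :
    {I : FractionalIdeal (𝓞 F)⁰ F |
      (1 : F) ∈ I ∧
        ∀ g : F, g ∈ I → (∀ w : InfinitePlace F, w g < 1) → g = 0}.Finite := by
  open mixedEmbedding in
  set C := ⌊(minkowskiBound F 1).toReal / convexBodyLTFactor F⌋₊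
  refine ((Ideal.finite_setOfPred_absNorm_le C).image
    fun J : Ideal (𝓞 F) ↦ (J : FractionalIdeal (𝓞 F)⁰ F)⁻¹).subset ?_
  rintro I ⟨h1, hmin⟩
  obtain ⟨J, hJ⟩ := le_one_iff_exists_coeIdeal.mp (inv_le_one_of_one_mem h1)
  refine ⟨J, Nat.le_floor ?_, by simp [hJ]⟩
  have hbound := mixedEmbedding.absNorm_inv_le_of_forall_infinitePlace_lt_one_imp_eq_zero
    (ne_zero_of_one_mem h1) hmin
  rwa [← hJ, coeIdeal_absNorm, Rat.cast_natCast] at hbound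
end

section
/- Let b₁,…,b_n be an LLL-reduced basis of a lattice in a real inner product space. Then for any lattice vector x = Σᵢ mᵢbᵢ (mᵢ ∈ ℤ) one has |mᵢ| ≤ 2^{(n−1)/2}·(3/2)^{n−i}·‖x‖/‖b₁‖ for i = 1,…,n. -/
/-!
Along an LLL-reduced basis the Gram–Schmidt norms drop by at most a factor `√2` per step
(Lovász condition together with `|μ| ≤ 1/2`), so `‖b₀‖ ≤ 2^{(n-1)/2} ‖b*ₖ‖` for every `k`.
Pairing `x = ∑ mⱼ bⱼ` with `b*ₖ` kills every `bⱼ` with `j < k`, and size reduction then gives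
`|mₖ| ≤ ‖x‖ / ‖b*ₖ‖ + (∑_{j > k} |mⱼ|) / 2`. Solving this triangular recursion from the last
index down produces the factor `(3/2)^{n-1-k}`.
-/

open Module
open scoped RealInnerProductSpace

/-- The Gram–Schmidt orthogonalization of a family of vectors indexed by `Fin n`. -/
noncomputable def gramSchmidtFin {n : ℕ} [NeZero n] {E : Type*}
    [NormedAddCommGroup E] [InnerProductSpace ℝ E] (b : Fin n → E) : Fin n → E :=
  @InnerProductSpace.gramSchmidt ℝ E _ _ _ (Fin n) _
    (inferInstance : LocallyFiniteOrderBot (Fin n))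
    (inferInstance : WellFoundedLT (Fin n)) b

open Finset InnerProductSpace

theorem gramSchmidtFin_eq_gramSchmidt {n : ℕ} [NeZero n] {E : Type*} [NormedAddCommGroup E]
    [InnerProductSpace ℝ E] (b : Fin n → E) : gramSchmidtFin b = gramSchmidt ℝ b := rfl

section GramSchmidt

variable {ι E : Type*} [LinearOrder ι] [LocallyFiniteOrderBot ι] [WellFoundedLT ι]
  [NormedAddCommGroup E] [InnerProductSpace ℝ E] (b : ι → E)

theorem inner_self_gramSchmidt (k : ι) :
    ⟪b k, gramSchmidt ℝ b k⟫ = ‖gramSchmidt ℝ b k‖ ^ 2 := by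
  conv_lhs => rw [gramSchmidt_def'' ℝ b k]
  rw [inner_add_left, sum_inner, real_inner_self_eq_norm_sq,
    sum_eq_zero fun i hi => by
      rw [real_inner_smul_left, gramSchmidt_orthogonal ℝ b (mem_Iio.mp hi).ne, mul_zero],
    add_zero]

variable [Fintype ι] [LocallyFiniteOrderTop ι]

theorem inner_sum_smul_gramSchmidt (c : ι → ℝ) (k : ι) :
    ⟪∑ j, c j • b j, gramSchmidt ℝ b k⟫ =
      c k * ‖gramSchmidt ℝ b k‖ ^ 2 + ∑ j ∈ Ioi k, c j * ⟪b j, gramSchmidt ℝ b k⟫ := by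
  classical
  simp only [sum_inner, real_inner_smul_left]
  rw [← sum_filter_add_sum_filter_not univ (k < ·), filter_lt_eq_Ioi, add_comm,
    sum_eq_single_of_mem k (by simp), inner_self_gramSchmidt]
  intro j hj hjk
  rw [real_inner_comm, gramSchmidt_inv_triangular ℝ b
    (lt_of_le_of_ne (not_lt.mp (mem_filter.mp hj).2) hjk), mul_zero]

theorem abs_coeff_le_of_size_reduced {k : ι} (hk : gramSchmidt ℝ b k ≠ 0)
    (hsize : ∀ j, k < j → |⟪b j, gramSchmidt ℝ b k⟫ / ‖gramSchmidt ℝ b k‖ ^ 2| ≤ 1 / 2)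
    (c : ι → ℝ) :
    |c k| ≤ ‖∑ j, c j • b j‖ / ‖gramSchmidt ℝ b k‖ + (∑ j ∈ Ioi k, |c j|) / 2 := by
  set g := gramSchmidt ℝ b k
  set x := ∑ j, c j • b j
  have hg : 0 < ‖g‖ := norm_pos_iff.mpr hk
  have htail : |∑ j ∈ Ioi k, c j * ⟪b j, g⟫| ≤ (∑ j ∈ Ioi k, |c j|) / 2 * ‖g‖ ^ 2 := by
    rw [div_mul_eq_mul_div, sum_mul, sum_div]
    refine (abs_sum_le_sum_abs _ _).trans (sum_le_sum fun j hj => ?_)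
    have := hsize j (mem_Ioi.mp hj)
    rw [abs_div, abs_of_pos (pow_pos hg 2), div_le_iff₀ (pow_pos hg 2)] at this
    rw [abs_mul, mul_div_assoc]
    gcongr
    linarith
  have hmul : |c k| * ‖g‖ ^ 2 ≤ ‖x‖ * ‖g‖ + (∑ j ∈ Ioi k, |c j|) / 2 * ‖g‖ ^ 2 := by
    have hx := inner_sum_smul_gramSchmidt b c k
    calc |c k| * ‖g‖ ^ 2 = |⟪x, g⟫ - ∑ j ∈ Ioi k, c j * ⟪b j, g⟫| := by
          rw [hx, add_sub_cancel_right, abs_mul, abs_of_nonneg (sq_nonneg ‖g‖)]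
      _ ≤ |⟪x, g⟫| + |∑ j ∈ Ioi k, c j * ⟪b j, g⟫| := abs_sub _ _
      _ ≤ _ := add_le_add (abs_real_inner_le_norm x g) htail
  rw [div_add' _ _ _ hg.ne', le_div_iff₀ hg]
  refine le_of_mul_le_mul_right ?_ hg
  linarith

end GramSchmidt

theorem norm_sq_le_two_mul_of_lovasz {E : Type*} [NormedAddCommGroup E] [InnerProductSpace ℝ E]
    {u v : E} {μ : ℝ} (huv : ⟪u, v⟫ = 0) (hμ : |μ| ≤ 1 / 2)
    (h : ‖u + μ • v‖ ^ 2 ≥ 3 / 4 * ‖v‖ ^ 2) : ‖v‖ ^ 2 ≤ 2 * ‖u‖ ^ 2 := by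
  rw [norm_add_sq_real, real_inner_smul_right, huv, norm_smul, mul_pow, Real.norm_eq_abs,
    sq_abs] at h
  have hμ_sq : μ ^ 2 ≤ 1 / 4 := by nlinarith [abs_nonneg μ, sq_abs μ]
  nlinarith [sq_nonneg ‖v‖]

theorem sum_Ico_le_of_le_add_half_sum_Ioo {a : ℕ → ℝ} {A : ℝ} {n : ℕ}
    (h : ∀ k < n, a k ≤ A + (∑ j ∈ Ioo k n, a j) / 2) {k : ℕ} (hk : k ≤ n) :
    ∑ j ∈ Ico k n, a j ≤ 2 * ((3 / 2) ^ (n - k) - 1) * A := by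
  induction hk using Nat.decreasingInduction with
  | self => simp
  | of_succ k hk ih =>
    have hexp : n - k = n - (k + 1) + 1 := by omega
    have := h k hk
    rw [← Ico_add_one_left_eq_Ioo] at this
    rw [sum_eq_sum_Ico_succ_bot hk, hexp, pow_succ]
    linarith

theorem le_three_halves_pow_mul_of_le_add_half_sum_Ioo {a : ℕ → ℝ} {A : ℝ} {n : ℕ}
    (h : ∀ k < n, a k ≤ A + (∑ j ∈ Ioo k n, a j) / 2) {k : ℕ} (hk : k < n) :
    a k ≤ (3 / 2) ^ (n - 1 - k) * A := by
  have htail := sum_Ico_le_of_le_add_half_sum_Ioo h (Nat.succ_le_of_lt hk)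
  rw [Nat.succ_eq_add_one, Ico_add_one_left_eq_Ioo,
    show n - (k + 1) = n - 1 - k by omega] at htail
  linarith [h k hk]

theorem Fin.le_three_halves_pow_mul_of_le_add_half_sum_Ioi {n : ℕ} {a : Fin n → ℝ}
    {A : ℝ} (h : ∀ k, a k ≤ A + (∑ j ∈ Ioi k, a j) / 2) (k : Fin n) :
    a k ≤ (3 / 2) ^ (n - 1 - (k : ℕ)) * A := by
  set a' : ℕ → ℝ := fun j => if hj : j < n then a ⟨j, hj⟩ else 0
  have hsum (k : Fin n) : ∑ j ∈ Ioi k, a j = ∑ j ∈ Ioo (k : ℕ) n, a' j := by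
    simp [a', ← Fin.map_valEmbedding_Ioi]
  simpa [a'] using le_three_halves_pow_mul_of_le_add_half_sum_Ioo (a := a')
    (fun j hj => by simpa [a', hj, hsum] using h ⟨j, hj⟩) k.isLt

theorem Fin.le_two_pow_mul_of_le_two_mul_succ {n : ℕ} [NeZero n] {f : Fin n → ℝ}
    (h : ∀ i j : Fin n, (j : ℕ) + 1 = i → f j ≤ 2 * f i) (k : Fin n) :
    f 0 ≤ 2 ^ (k : ℕ) * f k := by
  obtain ⟨k, hk⟩ := k
  induction k with
  | zero => simp
  | succ t ih =>
    calc f 0 ≤ 2 ^ t * f ⟨t, by omega⟩ := ih (by omega)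
      _ ≤ 2 ^ t * (2 * f ⟨t + 1, hk⟩) := by gcongr; exact h _ _ rfl
      _ = 2 ^ (t + 1) * f ⟨t + 1, hk⟩ := by ring

theorem norm_sq_le_two_pow_mul_gramSchmidt_of_lovasz {n : ℕ} [NeZero n] {E : Type*}
    [NormedAddCommGroup E] [InnerProductSpace ℝ E] {b : Fin n → E}
    (hsize : ∀ i j : Fin n, j < i →
      |⟪b i, gramSchmidt ℝ b j⟫ / ‖gramSchmidt ℝ b j‖ ^ 2| ≤ 1 / 2)
    (hlovasz : ∀ i j : Fin n, (j : ℕ) + 1 = (i : ℕ) →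
      ‖gramSchmidt ℝ b i +
          (⟪b i, gramSchmidt ℝ b j⟫ / ‖gramSchmidt ℝ b j‖ ^ 2) • gramSchmidt ℝ b j‖ ^ 2 ≥
        3 / 4 * ‖gramSchmidt ℝ b j‖ ^ 2) (k : Fin n) :
    ‖b 0‖ ^ 2 ≤ 2 ^ (k : ℕ) * ‖gramSchmidt ℝ b k‖ ^ 2 := by
  have h₀ : gramSchmidt ℝ b 0 = b 0 := by
    simp [gramSchmidt_def ℝ b 0, Iio_eq_empty.mpr (isMin_iff_eq_bot.mpr bot_eq_zero.symm)]
  rw [← h₀]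
  refine Fin.le_two_pow_mul_of_le_two_mul_succ (f := fun k => ‖gramSchmidt ℝ b k‖ ^ 2)
    (fun i j hij => ?_) k
  have hji : j < i := by rw [Fin.lt_def]; omega
  exact norm_sq_le_two_mul_of_lovasz (gramSchmidt_orthogonal ℝ b hji.ne') (hsize i j hji)
    (hlovasz i j hij)

theorem two_pow_le_two_rpow_sub_one_div_two_sq {k n : ℕ} (hk : k < n) :
    (2 : ℝ) ^ k ≤ (2 ^ (((n : ℝ) - 1) / 2)) ^ 2 := by
  rw [← Real.rpow_natCast _ 2, ← Real.rpow_mul zero_le_two, ← Real.rpow_natCast]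
  have : (k : ℝ) + 1 ≤ n := by exact_mod_cast hk
  exact Real.rpow_le_rpow_of_exponent_le one_le_two (by push_cast; linarith)

/-- Corollary 10.2. For an LLL-reduced basis `b₁,…,b_n` of a
lattice in a real inner product space, every lattice vector `x = Σᵢ mᵢ bᵢ`
(`mᵢ ∈ ℤ`) satisfies `|mᵢ| ≤ 2^{(n−1)/2}·(3/2)^{n−i}·‖x‖/‖b₁‖` (indices are
zero-based here, so the exponent is `n−1−i` and `b₁` is `b 0`). -/
theorem lll_coefficient_bound' (n : ℕ) [NeZero n]
    (E : Type*) [NormedAddCommGroup E] [InnerProductSpace ℝ E]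
    (b : Fin n → E) (hb : LinearIndependent ℝ b)
    (hsize : ∀ i j : Fin n, j < i →
      |⟪b i, gramSchmidtFin b j⟫ / ‖gramSchmidtFin b j‖ ^ 2| ≤ 1 / 2)
    (hlovasz : ∀ i j : Fin n, (j : ℕ) + 1 = (i : ℕ) →
      ‖gramSchmidtFin b i +
          (⟪b i, gramSchmidtFin b j⟫ / ‖gramSchmidtFin b j‖ ^ 2) • gramSchmidtFin b j‖ ^ 2 ≥
        3 / 4 * ‖gramSchmidtFin b j‖ ^ 2) :
    ∀ (m : Fin n → ℤ) (i : Fin n),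
      (|m i| : ℝ) ≤
        (2 : ℝ) ^ (((n : ℝ) - 1) / 2) * (3 / 2) ^ (n - 1 - (i : ℕ)) *
          ‖∑ j, (m j : ℝ) • b j‖ / ‖b 0‖ := by
  intro m i
  rw [gramSchmidtFin_eq_gramSchmidt] at hsize hlovasz
  set x := ∑ j, (m j : ℝ) • b j
  set c : ℝ := 2 ^ (((n : ℝ) - 1) / 2)
  have hb₀ : 0 < ‖b 0‖ := norm_pos_iff.mpr (hb.ne_zero 0)
  have hproj (k : Fin n) : ‖x‖ / ‖gramSchmidt ℝ b k‖ ≤ c * ‖x‖ / ‖b 0‖ := by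
    have hg : 0 < ‖gramSchmidt ℝ b k‖ := norm_pos_iff.mpr (gramSchmidt_ne_zero k hb)
    have hb₀g : ‖b 0‖ ≤ c * ‖gramSchmidt ℝ b k‖ := by
      rw [← pow_le_pow_iff_left₀ (norm_nonneg _) (by positivity) two_ne_zero, mul_pow]
      exact (norm_sq_le_two_pow_mul_gramSchmidt_of_lovasz hsize hlovasz k).trans
        (by gcongr; exact two_pow_le_two_rpow_sub_one_div_two_sq k.isLt)
    rw [div_le_div_iff₀ hg hb₀]
    linarith [mul_le_mul_of_nonneg_left hb₀g (norm_nonneg x)]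
  have hcoeff (k : Fin n) : |(m k : ℝ)| ≤ c * ‖x‖ / ‖b 0‖ + (∑ j ∈ Ioi k, |(m j : ℝ)|) / 2 :=
    (abs_coeff_le_of_size_reduced b (gramSchmidt_ne_zero k hb) (fun j => hsize j k)
      (fun j => (m j : ℝ))).trans (add_le_add_left (hproj k) _)
  refine (Fin.le_three_halves_pow_mul_of_le_add_half_sum_Ioi hcoeff i).trans_eq ?_
  ring
end
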